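/- Let N ≥ 1, Δt > 0, and let a, b ∈ ℂ^N satisfy the energy-preserving scheme with periodic boundary conditions, i.e. with the index conventions a_0 = a_N, a_{N+1} = a_1, b_0 = b_N, b_{N+1} = b_1: for each j = 1,…,N, b_j = a_j + Δt·( −i·((|a_j|² + |b_j|²)/2)·m_j + 2i \bar{m_j}·( (a_{j+1}² + b_{j+1}²)/2 + (a_{j−1}² + b_{j−1}²)/2 ) ), where m_j = (a_j + b_j)/2. Then Σ_{j=1}^N ( (1/4)|b_j|⁴ − Re(\bar{b_j}² b_{j−1}²) ) = Σ_{j=1}^N ( (1/4)|a_j|⁴ − Re(\bar{a_j}² a_{j−1}²) ), where the term j = 1 uses the periodic convention b_0 = b_N, a_0 = a_N. -/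
import Mathlib

private lemma quartic_aux (x y : ℂ) :
    (1/4:ℝ) * (Complex.normSq y)^2 - (1/4:ℝ) * (Complex.normSq x)^2
      = ((Complex.normSq x + Complex.normSq y)/2) * ((starRingEnd ℂ) ((x+y)/2) * (y - x)).re := by
  simp only [map_div₀, map_add, map_ofNat, Complex.normSq_apply, Complex.mul_re, Complex.mul_im,
    Complex.add_re, Complex.add_im, Complex.sub_re, Complex.sub_im, Complex.div_re, Complex.div_im,
    Complex.conj_re, Complex.conj_im, Complex.re_ofNat, Complex.im_ofNat, Complex.normSq_ofNat]
  ring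

private lemma cancel_aux (Δt c : ℝ) (mm d Q R : ℂ)
    (hd : d = (Δt:ℂ) * (-Complex.I * (c:ℂ) * mm + Complex.I * (starRingEnd ℂ) mm * (R + Q))) :
    c * ((starRingEnd ℂ) mm * d).re = ((starRingEnd ℂ) mm * (starRingEnd ℂ) d * (Q + R)).re := by
  subst hd
  simp only [map_mul, map_add, map_ofNat, Complex.conj_conj, Complex.conj_I, Complex.conj_ofReal,
    map_neg, Complex.mul_re, Complex.mul_im, Complex.add_re, Complex.add_im, Complex.neg_re,
    Complex.neg_im, Complex.I_re, Complex.I_im, Complex.conj_re, Complex.conj_im,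
    Complex.ofReal_re, Complex.ofReal_im]
  ring

private lemma inter_aux (x y A B : ℂ) :
    ((starRingEnd ℂ) y ^ 2 * B).re - ((starRingEnd ℂ) x ^ 2 * A).re
      = ((starRingEnd ℂ) ((x+y)/2) * (starRingEnd ℂ) (y - x) * (A + B)).re
        + ((B - A)/2 * ((starRingEnd ℂ) x ^ 2 + (starRingEnd ℂ) y ^ 2)).re := by
  rw [← Complex.sub_re, ← Complex.add_re]
  congr 1
  simp only [map_div₀, map_sub, map_add, map_ofNat]
  field_simp
  ring

private lemma conj_swap_aux (z w R : ℂ) :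
    (z * w * (starRingEnd ℂ) R).re = ((starRingEnd ℂ) z * (starRingEnd ℂ) w * R).re := by
  rw [← Complex.conj_re (z * w * (starRingEnd ℂ) R)]
  simp [map_mul]

private lemma telescope_aux (G : ℕ → ℝ) : ∀ n : ℕ,
    ∑ j ∈ Finset.Icc 1 n, (G j - G (j - 1)) = G n - G 0 := by
  intro n
  induction n with
  | zero => simp
  | succ k ih =>
    rw [Finset.sum_Icc_succ_top (by omega : 1 ≤ k + 1), ih]
    simp only [Nat.add_sub_cancel]
    ring

/-- The energy-preserving scheme for the toy model system with
periodic boundary conditions (`a 0 = a N`, `a (N+1) = a 1`, similarly for `b`)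
exactly conserves the Hamiltonian. -/
theorem energy_scheme_energy_conservation_periodic
    (N : ℕ) (hN : 1 ≤ N) (Δt : ℝ) (hΔt : 0 < Δt)
    (a b m : ℕ → ℂ)
    (ha0 : a 0 = a N) (haN : a (N + 1) = a 1)
    (hb0 : b 0 = b N) (hbN : b (N + 1) = b 1)
    (hm : ∀ j, m j = (a j + b j) / 2)
    (hscheme : ∀ j ∈ Finset.Icc 1 N,
      b j = a j + (Δt : ℂ) *
        (-Complex.I * ((((Complex.normSq (a j) + Complex.normSq (b j)) / 2 : ℝ) : ℂ)) * m j
          + 2 * Complex.I * (starRingEnd ℂ) (m j) *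
            (((a (j + 1)) ^ 2 + (b (j + 1)) ^ 2) / 2
              + ((a (j - 1)) ^ 2 + (b (j - 1)) ^ 2) / 2))) :
    (∑ j ∈ Finset.Icc 1 N, ((1 / 4 : ℝ) * (Complex.normSq (b j)) ^ 2
        - (((starRingEnd ℂ) (b j)) ^ 2 * (b (j - 1)) ^ 2).re))
      = ∑ j ∈ Finset.Icc 1 N, ((1 / 4 : ℝ) * (Complex.normSq (a j)) ^ 2
        - (((starRingEnd ℂ) (a j)) ^ 2 * (a (j - 1)) ^ 2).re) := by
  set G : ℕ → ℝ := fun k =>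
    (m k * (b k - a k) * ((starRingEnd ℂ) (a (k+1)) ^ 2 + (starRingEnd ℂ) (b (k+1)) ^ 2)).re
    with hG
  have key : ∀ j ∈ Finset.Icc 1 N,
      ((1 / 4 : ℝ) * (Complex.normSq (b j)) ^ 2
          - (((starRingEnd ℂ) (b j)) ^ 2 * (b (j - 1)) ^ 2).re)
        - ((1 / 4 : ℝ) * (Complex.normSq (a j)) ^ 2
          - (((starRingEnd ℂ) (a j)) ^ 2 * (a (j - 1)) ^ 2).re)
      = G j - G (j - 1) := by
    intro j hj
    have hj1 : 1 ≤ j := (Finset.mem_Icc.mp hj).1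
    set c : ℝ := (Complex.normSq (a j) + Complex.normSq (b j)) / 2 with hc
    set Q : ℂ := (a (j - 1)) ^ 2 + (b (j - 1)) ^ 2 with hQ
    set R : ℂ := (a (j + 1)) ^ 2 + (b (j + 1)) ^ 2 with hR
    have hd : b j - a j = (Δt:ℂ) *
        (-Complex.I * (c:ℂ) * m j + Complex.I * (starRingEnd ℂ) (m j) * (R + Q)) := by
      have hs := hscheme j hj
      rw [hQ, hR, hc]
      push_cast at hs ⊢
      linear_combination hs
    have h1 : (1/4:ℝ) * (Complex.normSq (b j))^2 - (1/4:ℝ) * (Complex.normSq (a j))^2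
        = c * ((starRingEnd ℂ) (m j) * (b j - a j)).re := by
      rw [hm j]; exact quartic_aux (a j) (b j)
    have h3 : c * ((starRingEnd ℂ) (m j) * (b j - a j)).re
        = ((starRingEnd ℂ) (m j) * (starRingEnd ℂ) (b j - a j) * (Q + R)).re :=
      cancel_aux Δt c (m j) (b j - a j) Q R hd
    have hsplit : ((starRingEnd ℂ) (m j) * (starRingEnd ℂ) (b j - a j) * (Q + R)).re
        = ((starRingEnd ℂ) (m j) * (starRingEnd ℂ) (b j - a j) * Q).re
          + ((starRingEnd ℂ) (m j) * (starRingEnd ℂ) (b j - a j) * R).re := by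
      rw [← Complex.add_re]; congr 1; ring
    have hGj : G j = ((starRingEnd ℂ) (m j) * (starRingEnd ℂ) (b j - a j) * R).re := by
      rw [hG]
      have : (starRingEnd ℂ) (a (j+1)) ^ 2 + (starRingEnd ℂ) (b (j+1)) ^ 2
          = (starRingEnd ℂ) R := by
        rw [hR]; simp [map_add, map_pow]
      simp only [this]
      exact conj_swap_aux (m j) (b j - a j) R
    have hGprev : G (j - 1)
        = (((b (j-1))^2 - (a (j-1))^2)/2
            * ((starRingEnd ℂ) (a j) ^ 2 + (starRingEnd ℂ) (b j) ^ 2)).re := by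
      have hj' : j - 1 + 1 = j := by omega
      rw [hG]
      simp only [hj', hm]
      congr 1
      ring
    have h2 : (((starRingEnd ℂ) (b j)) ^ 2 * (b (j - 1)) ^ 2).re
          - (((starRingEnd ℂ) (a j)) ^ 2 * (a (j - 1)) ^ 2).re
        = ((starRingEnd ℂ) (m j) * (starRingEnd ℂ) (b j - a j) * Q).re + G (j - 1) := by
      rw [hm j, hGprev, hQ]
      exact inter_aux (a j) (b j) ((a (j-1))^2) ((b (j-1))^2)
    linarith
  rw [← sub_eq_zero, ← Finset.sum_sub_distrib, Finset.sum_congr rfl key]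
  have htel : ∑ j ∈ Finset.Icc 1 N, (G j - G (j - 1)) = G N - G 0 :=
    telescope_aux G N
  have hG0 : G 0 = G N := by
    rw [hG]
    simp only [zero_add, hm, ha0, hb0, haN, hbN]
  rw [htel, hG0, sub_self]
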